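/- arXiv:1311.1460 — 5 statements merged into one kernel-verified Lean document; each statement's English description precedes it below -/
import Mathlib

section
/- Let N, e be coprime positive integers, r a divisor of e, d₁ a divisor of N and d₂ a divisor of e. For any integers (r_δ) indexed by divisors δ of N, one has (Ne/24)·Σ_{δ|N} gcd(d₁d₂, rδ)² r_δ / (gcd(d₁d₂, Ne/(d₁d₂)) · d₁d₂ · rδ) = (e·gcd(d₂², r²)/(r·gcd(d₂², e))) · (N/24)·Σ_{δ|N} gcd(d₁,δ)² r_δ / (gcd(d₁, N/d₁) · d₁ · δ), as an identity of rational numbers. -/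
/-!
Since `N` and `e` are coprime, every gcd in the sum on the left splits into an `N`-part and an
`e`-part: `gcd(d₁d₂, rδ) = gcd(d₁, δ)·gcd(d₂, r)`, `gcd(d₁d₂, Ne/(d₁d₂)) = gcd(d₁, N/d₁)·gcd(d₂, e/d₂)`,
and `gcd(d₂², e) = d₂·gcd(d₂, e/d₂)`. After these substitutions both sides, term by term, are the
same product of factors and inverses.
-/

open Finset

lemma gcd_mul_mul_of_coprime {a b c d : ℕ} (hab : a.Coprime b) (hac : a.Coprime c)
    (hbd : b.Coprime d) :
    Nat.gcd (a * b) (c * d) = Nat.gcd a d * Nat.gcd b c := by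
  rw [Nat.gcd_comm, Nat.Coprime.gcd_mul _ hab, hac.symm.gcd_mul_left_cancel d,
    hbd.symm.gcd_mul_right_cancel c, Nat.gcd_comm d a, Nat.gcd_comm c b]

lemma gcd_sq_of_dvd {d e : ℕ} (hd : d ∣ e) : Nat.gcd (d ^ 2) e = d * Nat.gcd d (e / d) := by
  conv_lhs => rw [sq, ← Nat.mul_div_cancel' hd, Nat.gcd_mul_left]

lemma gcd_mul_mul_of_dvd_coprime {N e d₁ d₂ r δ : ℕ} (hcop : N.Coprime e) (hd₁ : d₁ ∣ N)
    (hd₂ : d₂ ∣ e) (hr : r ∣ e) (hδ : δ ∣ N) :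
    Nat.gcd (d₁ * d₂) (r * δ) = Nat.gcd d₁ δ * Nat.gcd d₂ r :=
  gcd_mul_mul_of_coprime ((hcop.coprime_dvd_right hd₂).coprime_dvd_left hd₁)
    ((hcop.coprime_dvd_right hr).coprime_dvd_left hd₁)
    ((hcop.coprime_dvd_right hd₂).coprime_dvd_left hδ).symm

lemma gcd_mul_mul_div_mul_of_coprime {N e d₁ d₂ : ℕ} (hcop : N.Coprime e) (hd₁ : d₁ ∣ N)
    (hd₂ : d₂ ∣ e) :
    Nat.gcd (d₁ * d₂) (N * e / (d₁ * d₂)) = Nat.gcd d₁ (N / d₁) * Nat.gcd d₂ (e / d₂) := by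
  rw [mul_comm d₁, mul_comm N, ← Nat.div_mul_div_comm hd₂ hd₁, mul_comm d₂]
  exact gcd_mul_mul_of_dvd_coprime hcop hd₁ hd₂ (Nat.div_dvd_of_dvd hd₂) (Nat.div_dvd_of_dvd hd₁)

theorem ligozat_V_operator_identity_general (N e r d₁ d₂ : ℕ)
    (hcop : Nat.Coprime N e) (hr : r ∣ e) (hd₁ : d₁ ∣ N) (hd₂ : d₂ ∣ e)
    (rδ : ℕ → ℤ) :
    ((N * e : ℚ) / 24) * ∑ δ ∈ N.divisors,
        ((Nat.gcd (d₁ * d₂) (r * δ) : ℚ) ^ 2 * (rδ δ : ℚ)) /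
          ((Nat.gcd (d₁ * d₂) ((N * e) / (d₁ * d₂)) : ℚ) * (d₁ * d₂ : ℚ) * (r * δ : ℚ))
    = ((e : ℚ) * (Nat.gcd (d₂ ^ 2) (r ^ 2) : ℚ)) / ((r : ℚ) * (Nat.gcd (d₂ ^ 2) e : ℚ)) *
        (((N : ℚ) / 24) * ∑ δ ∈ N.divisors,
          ((Nat.gcd d₁ δ : ℚ) ^ 2 * (rδ δ : ℚ)) /
            ((Nat.gcd d₁ (N / d₁) : ℚ) * (d₁ : ℚ) * (δ : ℚ))) := by
  rw [gcd_mul_mul_div_mul_of_coprime hcop hd₁ hd₂, Nat.pow_gcd_pow, gcd_sq_of_dvd hd₂,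
    mul_sum, mul_sum, mul_sum]
  refine sum_congr rfl fun δ hδ => ?_
  rw [gcd_mul_mul_of_dvd_coprime hcop hd₁ hd₂ hr (Nat.dvd_of_mem_divisors hδ)]
  push_cast
  ring

/-- The Ligozat order-of-vanishing identity underlying Lemma 5.2 of Rouse–Webb:
for coprime positive integers `N`, `e`, a divisor `r` of `e`, divisors `d₁ ∣ N` and
`d₂ ∣ e`, and any integers `(r_δ)` indexed by the divisors of `N`,
the Ligozat sum of `f | V(r)` at the cusp `1/(d₁d₂)` on `Γ₀(eN)` equals
`(e·gcd(d₂²,r²)/(r·gcd(d₂²,e)))` times the Ligozat sum of `f` at `1/d₁` on `Γ₀(N)`. -/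
theorem ligozat_V_operator_identity (N e r d₁ d₂ : ℕ) (hN : 0 < N) (he : 0 < e)
    (hcop : Nat.Coprime N e) (hr : r ∣ e) (hd₁ : d₁ ∣ N) (hd₂ : d₂ ∣ e)
    (rδ : ℕ → ℤ) :
    ((N * e : ℚ) / 24) * ∑ δ ∈ N.divisors,
        ((Nat.gcd (d₁ * d₂) (r * δ) : ℚ) ^ 2 * (rδ δ : ℚ)) /
          ((Nat.gcd (d₁ * d₂) ((N * e) / (d₁ * d₂)) : ℚ) * (d₁ * d₂ : ℚ) * (r * δ : ℚ))
    = ((e : ℚ) * (Nat.gcd (d₂ ^ 2) (r ^ 2) : ℚ)) / ((r : ℚ) * (Nat.gcd (d₂ ^ 2) e : ℚ)) *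
        (((N : ℚ) / 24) * ∑ δ ∈ N.divisors,
          ((Nat.gcd d₁ δ : ℚ) ^ 2 * (rδ δ : ℚ)) /
            ((Nat.gcd d₁ (N / d₁) : ℚ) * (d₁ : ℚ) * (δ : ℚ))) :=
  ligozat_V_operator_identity_general N e r d₁ d₂ hcop hr hd₁ hd₂ rδ
end

section
/- Suppose h(q) = q^r · Π_{d|N} Π_{n≥1} (1 − q^{dn})^{s_d} is a formal power series (times q^r) with all coefficients in ℤ, where r ∈ ℤ, N is a positive integer, and each exponent s_d ∈ ℚ (using the generalized binomial expansion of (1−x)^s for rational s). Then every s_d ∈ ℤ. -/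
open Finset PowerSeries

/-- The generalized binomial coefficient `s(s-1)⋯(s-k+1)/k!` for `s : ℚ`. -/
noncomputable def qChoose (s : ℚ) (k : ℕ) : ℚ :=
  (∏ i ∈ Finset.range k, (s - i)) / (k.factorial : ℚ)

/-- The formal power series `∏_{n ≥ 1} (1 - q^{d n})` over `ℚ`; since the factor
`(1 - q^{dn})` only affects coefficients in degrees `≥ n`, the `k`-th coefficient is
that of the finite product `∏_{n=1}^{k+1} (1 - q^{dn})`. -/
noncomputable def etaSeries (d : ℕ) : PowerSeries ℚ :=
  PowerSeries.mk fun k =>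
    PowerSeries.coeff k
      (∏ n ∈ Finset.range (k + 1), (1 - (PowerSeries.X : PowerSeries ℚ) ^ (d * (n + 1))))

/-- The rational power `f^s = (1 + (f-1))^s = ∑_k binom(s,k) (f-1)^k` of a power series
with constant term `1`; since `f - 1` has positive order, the `k`-th coefficient is a
finite sum. -/
noncomputable def rpowSeries (f : PowerSeries ℚ) (s : ℚ) : PowerSeries ℚ :=
  PowerSeries.mk fun k =>
    ∑ j ∈ Finset.range (k + 1), qChoose s j * PowerSeries.coeff k ((f - 1) ^ j)

/-!
Induct on the divisors `d` in increasing order. Once `s e ∈ ℤ` for the divisors `e < d`, the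
factors `η_e ^ s_e` with `e < d` have integer coefficients (binomial coefficients of integers are
integers) and constant term `1`; modulo `q ^ (d + 1)` the factor with `e = d` is `1 - s_d q ^ d`
and the factors with `e > d` are `1`. So the coefficient of `q ^ d` in the product is an integer
minus `s_d`, and `s_d` is an integer.
-/

lemma qChoose_eq_choose (s : ℚ) (k : ℕ) : qChoose s k = Ring.choose s k := by
  rw [Ring.choose_eq_smul, ← Polynomial.aeval_eq_smeval, Polynomial.aeval_def,
    Polynomial.eval₂_eq_eval_map, descPochhammer_map, descPochhammer_eval_eq_prod_range,
    qChoose, smul_eq_mul, div_eq_inv_mul]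

lemma qChoose_intCast (m : ℤ) (k : ℕ) : qChoose m k = (Ring.choose m k : ℤ) := by
  rw [qChoose_eq_choose]
  exact (Ring.map_choose (Int.castRingHom ℚ) m k).symm

lemma dvd_prod_sub_one {R ι : Type*} [CommRing R] {a : R} {T : Finset ι} {f : ι → R}
    (h : ∀ i ∈ T, a ∣ f i - 1) : a ∣ ∏ i ∈ T, f i - 1 := by
  rw [← Ideal.mem_span_singleton, ← Ideal.Quotient.eq, map_prod, map_one]
  exact prod_eq_one fun i hi => Ideal.Quotient.eq.mpr (Ideal.mem_span_singleton.mpr (h i hi))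

namespace PowerSeries

lemma coeff_mul_eq_of_X_pow_dvd_sub {R : Type*} [CommRing R] {n k : ℕ} {g g' : R⟦X⟧}
    (hn : n < k) (h : X ^ k ∣ g - g') (f : R⟦X⟧) : coeff n (f * g) = coeff n (f * g') := by
  rw [← sub_eq_zero, ← map_sub, ← mul_sub]
  exact X_pow_dvd_iff.mp (h.mul_left f) n hn

lemma X_pow_dvd_sub_one_of_X_pow_succ_dvd_sub {R : Type*} [CommRing R] {f : R⟦X⟧} {n : ℕ}
    (hf : X ^ (n + 1) ∣ f - (1 - X ^ n)) : X ^ n ∣ f - 1 := by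
  have h := ((pow_dvd_pow X n.le_succ).trans hf).sub (dvd_refl (X ^ n))
  rwa [sub_sub, sub_add_cancel] at h

end PowerSeries

noncomputable def integralSeries : Subring ℚ⟦X⟧ := (PowerSeries.map (Int.castRingHom ℚ)).range

lemma mem_integralSeries_iff {f : ℚ⟦X⟧} :
    f ∈ integralSeries ↔ ∀ k, ∃ m : ℤ, coeff k f = m := by
  constructor
  · rintro ⟨g, rfl⟩ k
    exact ⟨coeff k g, by simp⟩
  · intro h
    choose m hm using h
    exact ⟨mk m, by ext k; simp [hm]⟩

lemma mem_integralSeries_of_forall_coeff {f : ℚ⟦X⟧}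
    (h : ∀ k, ∃ g ∈ integralSeries, coeff k f = coeff k g) : f ∈ integralSeries := by
  refine mem_integralSeries_iff.mpr fun k => ?_
  obtain ⟨g, hg, hfg⟩ := h k
  rw [hfg]
  exact mem_integralSeries_iff.mp hg k

lemma C_intCast_mem_integralSeries (m : ℤ) : C (m : ℚ) ∈ integralSeries :=
  ⟨C m, by simp⟩

lemma X_mem_integralSeries : (X : ℚ⟦X⟧) ∈ integralSeries :=
  ⟨X, map_X _⟩

noncomputable def binomialSum (f : ℚ⟦X⟧) (s : ℚ) (J : ℕ) : ℚ⟦X⟧ :=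
  ∑ j ∈ range J, C (qChoose s j) * (f - 1) ^ j

lemma coeff_rpowSeries (f : ℚ⟦X⟧) (s : ℚ) (k : ℕ) :
    coeff k (rpowSeries f s) = coeff k (binomialSum f s (k + 1)) := by
  simp [rpowSeries, binomialSum, map_sum, coeff_C_mul]

lemma constantCoeff_rpowSeries (f : ℚ⟦X⟧) (s : ℚ) : constantCoeff (rpowSeries f s) = 1 := by
  rw [← coeff_zero_eq_constantCoeff_apply]
  simp [rpowSeries, qChoose]

lemma binomialSum_intCast_mem {f : ℚ⟦X⟧} (hf : f ∈ integralSeries) (m : ℤ) (J : ℕ) :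
    binomialSum f m J ∈ integralSeries :=
  sum_mem fun j _ => mul_mem (qChoose_intCast m j ▸ C_intCast_mem_integralSeries _)
    (pow_mem (sub_mem hf (one_mem _)) j)

lemma rpowSeries_intCast_mem {f : ℚ⟦X⟧} (hf : f ∈ integralSeries) (m : ℤ) :
    rpowSeries f m ∈ integralSeries :=
  mem_integralSeries_of_forall_coeff fun k =>
    ⟨_, binomialSum_intCast_mem hf m (k + 1), coeff_rpowSeries f m k⟩

lemma X_pow_dvd_binomialSum_sub {f : ℚ⟦X⟧} {n : ℕ} (hf : X ^ n ∣ f - 1) (s : ℚ) {J J' : ℕ}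
    (h : J ≤ J') : X ^ (n * J) ∣ binomialSum f s J' - binomialSum f s J := by
  rw [binomialSum, binomialSum, ← sum_Ico_eq_sub _ h]
  refine Finset.dvd_sum fun j hj => Dvd.dvd.mul_left ?_ _
  rw [pow_mul]
  exact (pow_dvd_pow _ (mem_Ico.mp hj).1).trans (pow_dvd_pow_of_dvd hf j)

lemma X_pow_dvd_rpowSeries_sub_binomialSum {f : ℚ⟦X⟧} {n : ℕ} (hf : X ^ n ∣ f - 1) (s : ℚ)
    (J : ℕ) : X ^ (n * J) ∣ rpowSeries f s - binomialSum f s J := by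
  refine X_pow_dvd_iff.mpr fun m hm => ?_
  rw [map_sub, coeff_rpowSeries, sub_eq_zero]
  rcases le_total (m + 1) J with h | h
  · have hlt : m < n * (m + 1) := by
      rcases Nat.eq_zero_or_pos n with rfl | hn <;> [simp at hm; nlinarith]
    exact (sub_eq_zero.mp (X_pow_dvd_iff.mp (X_pow_dvd_binomialSum_sub hf s h) m hlt)).symm
  · exact sub_eq_zero.mp (X_pow_dvd_iff.mp (X_pow_dvd_binomialSum_sub hf s h) m hm)

lemma X_pow_dvd_rpowSeries_sub_one {f : ℚ⟦X⟧} {n : ℕ} (hf : X ^ n ∣ f - 1) (s : ℚ) :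
    X ^ n ∣ rpowSeries f s - 1 := by
  simpa [binomialSum, qChoose] using X_pow_dvd_rpowSeries_sub_binomialSum hf s 1

lemma X_pow_succ_dvd_rpowSeries_sub {f : ℚ⟦X⟧} {n : ℕ} (hn : 0 < n)
    (hf : X ^ (n + 1) ∣ f - (1 - X ^ n)) (s : ℚ) :
    X ^ (n + 1) ∣ rpowSeries f s - (1 - C s * X ^ n) := by
  have hf₁ := X_pow_dvd_sub_one_of_X_pow_succ_dvd_sub hf
  have hsum : binomialSum f s 2 = 1 + C s * (f - 1) := by
    simp [binomialSum, sum_range_succ, qChoose]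
  have key : rpowSeries f s - (1 - C s * X ^ n) =
      (rpowSeries f s - binomialSum f s 2) + C s * (f - (1 - X ^ n)) := by
    rw [hsum]; ring
  rw [key]
  exact dvd_add ((pow_dvd_pow X (by omega)).trans
    (X_pow_dvd_rpowSeries_sub_binomialSum hf₁ s 2)) (hf.mul_left _)

lemma etaSeries_mem_integralSeries (d : ℕ) : etaSeries d ∈ integralSeries :=
  mem_integralSeries_of_forall_coeff fun _ =>
    ⟨_, prod_mem fun _ _ => sub_mem (one_mem _) (pow_mem X_mem_integralSeries _),
      coeff_mk _ _⟩

lemma X_pow_succ_dvd_etaSeries_sub {d : ℕ} (hd : 0 < d) :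
    X ^ (d + 1) ∣ etaSeries d - (1 - X ^ d) := by
  refine X_pow_dvd_iff.mpr fun m hm => ?_
  have htail : X ^ (2 * d) ∣
      ∏ n ∈ range m, (1 - (X : ℚ⟦X⟧) ^ (d * (n + 1 + 1))) - 1 :=
    dvd_prod_sub_one fun n _ => by
      simpa using (pow_dvd_pow X (by nlinarith : 2 * d ≤ d * (n + 1 + 1))).neg_right
  rw [map_sub, sub_eq_zero, etaSeries, coeff_mk, prod_range_succ', mul_comm,
    coeff_mul_eq_of_X_pow_dvd_sub (by omega) htail, mul_one, zero_add, mul_one]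

lemma X_pow_dvd_etaSeries_sub_one {d : ℕ} (hd : 0 < d) : X ^ d ∣ etaSeries d - 1 :=
  X_pow_dvd_sub_one_of_X_pow_succ_dvd_sub (X_pow_succ_dvd_etaSeries_sub hd)

lemma exists_intCast_exponent_of_forall_lt {S : Finset ℕ} (hS : ∀ e ∈ S, 0 < e) {s : ℕ → ℚ}
    (hint : ∏ e ∈ S, rpowSeries (etaSeries e) (s e) ∈ integralSeries) {d : ℕ} (hd : d ∈ S)
    (hlower : ∀ e ∈ S, e < d → ∃ m : ℤ, s e = m) : ∃ m : ℤ, s d = m := by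
  set F : ℕ → ℚ⟦X⟧ := fun e => rpowSeries (etaSeries e) (s e)
  set A := (S.erase d).filter (· < d)
  set B := (S.erase d).filter (¬ · < d)
  have hsplit : ∏ e ∈ S, F e = (∏ e ∈ A, F e) * F d * ∏ e ∈ B, F e := by
    rw [← mul_prod_erase S F hd, ← prod_filter_mul_prod_filter_not (S.erase d) (· < d)]
    ring
  have hA : ∏ e ∈ A, F e ∈ integralSeries := prod_mem fun e he => by
    obtain ⟨he, hed⟩ := mem_filter.mp he
    obtain ⟨m, hm⟩ := hlower e (mem_of_mem_erase he) hed
    simpa only [F, hm] using rpowSeries_intCast_mem (etaSeries_mem_integralSeries e) m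
  have hA₀ : constantCoeff (∏ e ∈ A, F e) = 1 := by
    rw [map_prod]
    exact prod_eq_one fun e _ => constantCoeff_rpowSeries _ _
  have hB : X ^ (d + 1) ∣ ∏ e ∈ B, F e - 1 := dvd_prod_sub_one fun e he => by
    obtain ⟨he, hnlt⟩ := mem_filter.mp he
    have hde : d + 1 ≤ e := by have := ne_of_mem_erase he; omega
    exact (pow_dvd_pow X hde).trans (X_pow_dvd_rpowSeries_sub_one
      (X_pow_dvd_etaSeries_sub_one (hS e (mem_of_mem_erase he))) _)
  have hFd : X ^ (d + 1) ∣ F d - (1 - C (s d) * X ^ d) :=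
    X_pow_succ_dvd_rpowSeries_sub (hS d hd) (X_pow_succ_dvd_etaSeries_sub (hS d hd)) _
  have hcoeff : coeff d (∏ e ∈ S, F e) = coeff d (∏ e ∈ A, F e) - s d :=
    calc coeff d (∏ e ∈ S, F e)
        = coeff d ((∏ e ∈ A, F e) * F d * 1) := by
          rw [hsplit, coeff_mul_eq_of_X_pow_dvd_sub d.lt_succ_self hB]
      _ = coeff d ((∏ e ∈ A, F e) * (1 - C (s d) * X ^ d)) := by
          rw [mul_one, coeff_mul_eq_of_X_pow_dvd_sub d.lt_succ_self hFd]
      _ = coeff d (∏ e ∈ A, F e) - s d := by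
          simp [mul_sub, mul_left_comm _ (C (s d)), coeff_mul_X_pow', hA₀]
  obtain ⟨a, ha⟩ := mem_integralSeries_iff.mp hA d
  obtain ⟨b, hb⟩ := mem_integralSeries_iff.mp hint d
  exact ⟨a - b, by push_cast; linarith⟩

theorem exists_intCast_exponent_of_prod_mem_integralSeries {S : Finset ℕ} (hS : ∀ e ∈ S, 0 < e)
    {s : ℕ → ℚ} (hint : ∏ e ∈ S, rpowSeries (etaSeries e) (s e) ∈ integralSeries) :
    ∀ d ∈ S, ∃ m : ℤ, s d = m := by
  intro d
  induction d using Nat.strong_induction_on with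
  | _ d ih =>
    exact fun hd => exists_intCast_exponent_of_forall_lt hS hint hd fun e he hed => ih e hed he

theorem rational_exponent_eta_product_integral_coeffs_implies_integer_exponents_general
    (N : ℕ) (s : ℕ → ℚ)
    (hint : ∀ k : ℕ, ∃ m : ℤ,
      PowerSeries.coeff k (∏ d ∈ N.divisors, rpowSeries (etaSeries d) (s d)) = (m : ℚ)) :
    ∀ d ∈ N.divisors, ∃ m : ℤ, s d = (m : ℚ) :=
  exists_intCast_exponent_of_prod_mem_integralSeries (fun _ => Nat.pos_of_mem_divisors)
    (mem_integralSeries_iff.mpr hint)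

/-- Lemma "step 4" of Rouse–Webb: if `h = ∏_{d ∣ N} (∏_{n ≥ 1}(1 - q^{dn}))^{s_d}` with
rational exponents `s_d` has all of its coefficients in `ℤ`, then every `s_d ∈ ℤ`
(so that, after multiplying by a suitable power of `q`, `h` is an honest eta-quotient). -/
theorem rational_exponent_eta_product_integral_coeffs_implies_integer_exponents
    (N : ℕ) (hN : 0 < N) (s : ℕ → ℚ)
    (hint : ∀ k : ℕ, ∃ m : ℤ,
      PowerSeries.coeff k (∏ d ∈ N.divisors, rpowSeries (etaSeries d) (s d)) = (m : ℚ)) :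
    ∀ d ∈ N.divisors, ∃ m : ℤ, s d = (m : ℚ) :=
  rational_exponent_eta_product_integral_coeffs_implies_integer_exponents_general N s hint
end

section
/- The number of eta-quotients f(z) = Π_{δ|N} η(δz)^{r_δ} in M_k(Γ₀(4)) (k even, k ≥ 0) equals k²/8 + 3k/4 + 1, which equals the number of triples of non-negative integers (c₁,c₂,c₄) with c₁ + c₂ + c₄ = k/2. -/
/-!
For level 4 the three Ligozat sums are `24` times the orders `c_∞, c_0, c_{1/2}` of the
eta-quotient at the cusps `∞, 0, 1/2`, and the exponents are recovered from them linearly: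
`(r₁, r₂, r₄) = c_∞ (0, -4, 8) + c_0 (8, -4, 0) + c_{1/2} (-8, 20, -8)`. Newman's divisibility
conditions say that `c_∞` and `c_0` are integers, the weight condition says
`c_∞ + c_0 + c_{1/2} = k/2` (so `c_{1/2}` is an integer as well when `k` is even), and the square
condition is then automatic since `r₂` is even. Hence the eta-quotients in `M_k(Γ₀(4))` are the
monomials in `η(4z)⁸/η(2z)⁴`, `η(z)⁸/η(2z)⁴` and `η(2z)²⁰/(η(z)η(4z))⁸` of total degree `k/2`,
and there are `binom(k/2 + 2, 2)` of them.
-/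

open Finset

lemma divisors_four : (4 : ℕ).divisors = {1, 2, 4} := by decide

@[to_additive]
lemma prod_divisors_four {M : Type*} [CommMonoid M] (f : ℕ → M) :
    ∏ δ ∈ (4 : ℕ).divisors, f δ = f 1 * f 2 * f 4 := by
  rw [divisors_four, prod_insert (by decide), prod_insert (by decide), prod_singleton, mul_assoc]

def IsLevelFourEtaExponent (k : ℕ) (r : ℕ → ℤ) : Prop :=
  (∀ δ : ℕ, δ ∉ (4 : ℕ).divisors → r δ = 0) ∧
  (∑ δ ∈ (4 : ℕ).divisors, r δ = 2 * (k : ℤ)) ∧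
  ((24 : ℤ) ∣ ∑ δ ∈ (4 : ℕ).divisors, (δ : ℤ) * r δ) ∧
  ((24 : ℤ) ∣ ∑ δ ∈ (4 : ℕ).divisors, ((4 / δ : ℕ) : ℤ) * r δ) ∧
  (∃ x : ℚ, ∏ δ ∈ (4 : ℕ).divisors, (δ : ℚ) ^ (r δ) = x ^ 2) ∧
  (∀ d ∈ (4 : ℕ).divisors, (0 : ℚ) ≤ ∑ δ ∈ (4 : ℕ).divisors,
    (Nat.gcd d δ : ℚ) ^ 2 * (r δ : ℚ) /
      ((Nat.gcd d (4 / d) : ℚ) * (d : ℚ) * (δ : ℚ)))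

lemma ligozat_conditions_iff (r : ℕ → ℤ) :
    (∀ d ∈ (4 : ℕ).divisors, (0 : ℚ) ≤ ∑ δ ∈ (4 : ℕ).divisors,
      (Nat.gcd d δ : ℚ) ^ 2 * (r δ : ℚ) / ((Nat.gcd d (4 / d) : ℚ) * (d : ℚ) * (δ : ℚ))) ↔
    0 ≤ 4 * r 1 + 2 * r 2 + r 4 ∧ 0 ≤ r 1 + 2 * r 2 + r 4 ∧ 0 ≤ r 1 + 2 * r 2 + 4 * r 4 := by
  simp only [sum_divisors_four]
  simp only [divisors_four, mem_insert, mem_singleton, forall_eq_or_imp, forall_eq]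
  norm_num
  qify
  constructor <;> rintro ⟨h1, h2, h4⟩ <;> refine ⟨?_, ?_, ?_⟩ <;> linarith

lemma exists_sq_one_two_four_zpow_of_even {r₁ r₂ r₄ : ℤ} (h : Even r₂) :
    ∃ x : ℚ, (1 : ℚ) ^ r₁ * 2 ^ r₂ * 4 ^ r₄ = x ^ 2 := by
  obtain ⟨m, rfl⟩ := h
  refine ⟨2 ^ m * 2 ^ r₄, ?_⟩
  rw [one_zpow, zpow_add₀ two_ne_zero, show (4 : ℚ) = 2 * 2 by norm_num, mul_zpow]
  ring

/-- `c = (c_∞, c_0, c_{1/2})`. -/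
def etaExponentOfOrders (c : ℕ × ℕ × ℕ) (δ : ℕ) : ℤ :=
  if δ = 1 then 8 * c.2.1 - 8 * c.2.2
  else if δ = 2 then 20 * c.2.2 - 4 * c.1 - 4 * c.2.1
  else if δ = 4 then 8 * c.1 - 8 * c.2.2
  else 0

lemma etaExponentOfOrders_eq_iff {c : ℕ × ℕ × ℕ} {r : ℕ → ℤ}
    (hr : ∀ δ : ℕ, δ ∉ (4 : ℕ).divisors → r δ = 0) :
    etaExponentOfOrders c = r ↔ r 1 = 8 * c.2.1 - 8 * c.2.2 ∧
      r 2 = 20 * c.2.2 - 4 * c.1 - 4 * c.2.1 ∧ r 4 = 8 * c.1 - 8 * c.2.2 := by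
  constructor
  · rintro rfl
    simp [etaExponentOfOrders]
  · rintro ⟨h1, h2, h4⟩
    funext δ
    by_cases hδ : δ ∈ (4 : ℕ).divisors
    · simp only [divisors_four, mem_insert, mem_singleton] at hδ
      rcases hδ with rfl | rfl | rfl <;> simp [etaExponentOfOrders, *]
    · simp_all [etaExponentOfOrders, divisors_four]

lemma etaExponentOfOrders_injective : Function.Injective etaExponentOfOrders := by
  intro c c' h
  have h1 := congrFun h 1
  have h2 := congrFun h 2
  have h4 := congrFun h 4
  simp only [etaExponentOfOrders] at h1 h2 h4
  norm_num at h1 h2 h4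
  ext <;> omega

lemma isLevelFourEtaExponent_etaExponentOfOrders {k : ℕ} {c : ℕ × ℕ × ℕ}
    (hc : 2 * (c.1 + c.2.1 + c.2.2) = k) : IsLevelFourEtaExponent k (etaExponentOfOrders c) := by
  have hk : (k : ℤ) = 2 * (c.1 + c.2.1 + c.2.2) := by exact_mod_cast hc.symm
  refine ⟨fun δ hδ => ?_, ?_, ⟨c.1, ?_⟩, ⟨c.2.1, ?_⟩, ?_, (ligozat_conditions_iff _).2 ?_⟩
  · simp only [divisors_four, mem_insert, mem_singleton, not_or] at hδ
    simp [etaExponentOfOrders, hδ]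
  · simp only [sum_divisors_four, etaExponentOfOrders]; norm_num; omega
  · simp only [sum_divisors_four, etaExponentOfOrders]; norm_num; omega
  · simp only [sum_divisors_four, etaExponentOfOrders]; norm_num; omega
  · rw [prod_divisors_four]
    push_cast
    exact exists_sq_one_two_four_zpow_of_even ⟨10 * c.2.2 - 2 * c.1 - 2 * c.2.1, by
      simp only [etaExponentOfOrders]; norm_num; ring⟩
  · simp only [etaExponentOfOrders]; norm_num; omega

lemma IsLevelFourEtaExponent.exists_eq_etaExponentOfOrders {k : ℕ} {r : ℕ → ℤ} (hk : Even k)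
    (hr : IsLevelFourEtaExponent k r) :
    ∃ c : ℕ × ℕ × ℕ, 2 * (c.1 + c.2.1 + c.2.2) = k ∧ etaExponentOfOrders c = r := by
  obtain ⟨hsupp, hsum, ⟨a, ha⟩, ⟨b, hb⟩, -, hcusps⟩ := hr
  obtain ⟨n, rfl⟩ := hk
  simp only [sum_divisors_four] at hsum ha hb
  norm_num at hsum ha hb
  rw [ligozat_conditions_iff] at hcusps
  refine ⟨(a.toNat, b.toNat, (n - a - b).toNat), by dsimp only; omega, ?_⟩
  rw [etaExponentOfOrders_eq_iff hsupp]
  dsimp only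
  omega

lemma setOf_isLevelFourEtaExponent {k : ℕ} (hk : Even k) :
    {r | IsLevelFourEtaExponent k r} =
      etaExponentOfOrders '' {c | 2 * (c.1 + c.2.1 + c.2.2) = k} := by
  ext r
  refine ⟨fun hr => hr.exists_eq_etaExponentOfOrders hk, ?_⟩
  rintro ⟨c, hc, rfl⟩
  exact isLevelFourEtaExponent_etaExponentOfOrders hc

lemma card_isLevelFourEtaExponent {k : ℕ} (hk : Even k) :
    Nat.card {r // IsLevelFourEtaExponent k r} =
      Nat.card {c : ℕ × ℕ × ℕ // 2 * (c.1 + c.2.1 + c.2.2) = k} := by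
  have := Nat.card_image_of_injective etaExponentOfOrders_injective
    {c : ℕ × ℕ × ℕ | 2 * (c.1 + c.2.1 + c.2.2) = k}
  rwa [← setOf_isLevelFourEtaExponent hk] at this

def tripleSumEquivSigma (n : ℕ) :
    {c : ℕ × ℕ × ℕ // c.1 + c.2.1 + c.2.2 = n} ≃ Σ i : Fin (n + 1), Fin (n + 1 - i) where
  toFun c := ⟨⟨c.1.1, by omega⟩, ⟨c.1.2.1, by dsimp only; omega⟩⟩
  invFun p := ⟨(p.1, p.2, n - p.1 - p.2), by have := p.2.isLt; dsimp only; omega⟩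
  left_inv c := by ext <;> dsimp only; omega
  right_inv _ := rfl

lemma card_triples_sum_eq (n : ℕ) :
    Nat.card {c : ℕ × ℕ × ℕ // c.1 + c.2.1 + c.2.2 = n} = (n + 2).choose 2 := calc
  _ = ∑ i ∈ range (n + 1), (n + 1 - i) := by
    rw [Nat.card_congr (tripleSumEquivSigma n), Nat.card_sigma]
    simp only [Nat.card_eq_fintype_card, Fintype.card_fin]
    exact Fin.sum_univ_eq_sum_range (fun i => n + 1 - i) (n + 1)
  _ = ∑ i ∈ range (n + 1), (i + 1).choose 1 := by
    rw [← sum_range_reflect]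
    refine sum_congr rfl fun i hi => ?_
    rw [Nat.choose_one_right]
    have := mem_range.mp hi
    omega
  _ = (n + 2).choose 2 := Nat.sum_range_add_choose n 1

/-- The number of eta-quotients `∏_{δ∣4} η(δz)^{r_δ}` lying in `M_k(Γ₀(4))` (exponent
tuples satisfying Newman's transformation conditions for weight `k` and level `4`,
together with Ligozat's non-negativity conditions at all cusps) equals
`k²/8 + 3k/4 + 1`, which is also the number of triples `(c₁,c₂,c₄)` of non-negative
integers with `c₁ + c₂ + c₄ = k/2`. -/
theorem count_eta_quotients_level_four (k : ℕ) (hk : Even k) :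
    (Nat.card {r : ℕ → ℤ //
        (∀ δ : ℕ, δ ∉ (4 : ℕ).divisors → r δ = 0) ∧
        (∑ δ ∈ (4 : ℕ).divisors, r δ = 2 * (k : ℤ)) ∧
        ((24 : ℤ) ∣ ∑ δ ∈ (4 : ℕ).divisors, (δ : ℤ) * r δ) ∧
        ((24 : ℤ) ∣ ∑ δ ∈ (4 : ℕ).divisors, ((4 / δ : ℕ) : ℤ) * r δ) ∧
        (∃ x : ℚ, ∏ δ ∈ (4 : ℕ).divisors, (δ : ℚ) ^ (r δ) = x ^ 2) ∧
        (∀ d ∈ (4 : ℕ).divisors, (0 : ℚ) ≤ ∑ δ ∈ (4 : ℕ).divisors,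
          (Nat.gcd d δ : ℚ) ^ 2 * (r δ : ℚ) /
            ((Nat.gcd d (4 / d) : ℚ) * (d : ℚ) * (δ : ℚ)))} : ℚ)
      = (k : ℚ) ^ 2 / 8 + 3 * (k : ℚ) / 4 + 1 ∧
    Nat.card {r : ℕ → ℤ //
        (∀ δ : ℕ, δ ∉ (4 : ℕ).divisors → r δ = 0) ∧
        (∑ δ ∈ (4 : ℕ).divisors, r δ = 2 * (k : ℤ)) ∧
        ((24 : ℤ) ∣ ∑ δ ∈ (4 : ℕ).divisors, (δ : ℤ) * r δ) ∧
        ((24 : ℤ) ∣ ∑ δ ∈ (4 : ℕ).divisors, ((4 / δ : ℕ) : ℤ) * r δ) ∧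
        (∃ x : ℚ, ∏ δ ∈ (4 : ℕ).divisors, (δ : ℚ) ^ (r δ) = x ^ 2) ∧
        (∀ d ∈ (4 : ℕ).divisors, (0 : ℚ) ≤ ∑ δ ∈ (4 : ℕ).divisors,
          (Nat.gcd d δ : ℚ) ^ 2 * (r δ : ℚ) /
            ((Nat.gcd d (4 / d) : ℚ) * (d : ℚ) * (δ : ℚ)))}
      = Nat.card {c : ℕ × ℕ × ℕ // 2 * (c.1 + c.2.1 + c.2.2) = k} := by
  have hcard := card_isLevelFourEtaExponent hk
  obtain ⟨n, rfl⟩ := hk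
  have htriples : Nat.card {c : ℕ × ℕ × ℕ // 2 * (c.1 + c.2.1 + c.2.2) = n + n} =
      (n + 2).choose 2 := by
    rw [← card_triples_sum_eq n]
    exact Nat.card_congr (Equiv.subtypeEquivRight fun c => by omega)
  have hcount : (Nat.card {r // IsLevelFourEtaExponent (n + n) r} : ℚ) =
      ((n + n : ℕ) : ℚ) ^ 2 / 8 + 3 * ((n + n : ℕ) : ℚ) / 4 + 1 := by
    rw [hcard, htriples, Nat.cast_choose_two]
    push_cast
    ring
  exact ⟨hcount, hcard⟩
end

section
/- Let k be a positive even integer, N a positive integer, and suppose there exists a nonzero weakly holomorphic modular form f of weight k on Γ₀(N) that is non-vanishing on the upper half plane. If Γ₀(N) has an elliptic point of order 2 then 4 | k, and if Γ₀(N) has an elliptic point of order 3 then 6 | k. -/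
open Complex UpperHalfPlane ModularForm
open scoped ModularForm Manifold MatrixGroups

/-! At a point `z` fixed by `γ = [[a, b], [c, d]] ∈ Γ₀(N)`, modularity reads
`f z = (c z + d) ^ k * f z`, so `j = c z + d` satisfies `j ^ k = 1` as `f z ≠ 0`.
The factor `j` is multiplicative along powers of `γ` at the fixed point, so `γ ^ 2 = -1`
gives `j ^ 2 = -1`, a primitive fourth root of unity, whence `4 ∣ k`; and `γ ^ 3 = ±1`
gives `j ^ 3 = ±1`, where `j` is not real because `c ≠ 0`, so `±j` is a primitive cube
root of unity and `3 ∣ k`. -/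

namespace ModularGroup

variable {γ : SL(2, ℤ)} {z : ℍ}

lemma denom_mul (γ δ : SL(2, ℤ)) (z : ℍ) :
    denom (↑(γ * δ) : GL (Fin 2) ℝ) z = denom γ (δ • z : ℍ) * denom δ z := by
  rw [show (↑(γ * δ) : GL (Fin 2) ℝ) = γ * δ by simp only [map_mul], denom_cocycle_σ, sl_moeb]
  congr 1
  simp [σ]

lemma denom_pow_of_smul_eq (hz : γ • z = z) (n : ℕ) :
    denom (↑(γ ^ n) : GL (Fin 2) ℝ) z = denom γ z ^ n := by
  induction n with
  | zero => simp [denom_apply]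
  | succ n ih => rw [pow_succ, denom_mul, hz, ih, pow_succ]

lemma denom_pow_eq_of_pow_eq_smul_one (hz : γ • z = z) {n : ℕ} {ε : ℤ}
    (h : (γ : Matrix (Fin 2) (Fin 2) ℤ) ^ n = ε • 1) : denom γ z ^ n = ε := by
  have hc : (γ ^ n) 1 0 = 0 := by rw [Matrix.SpecialLinearGroup.coe_pow, h]; simp
  have hd : (γ ^ n) 1 1 = ε := by rw [Matrix.SpecialLinearGroup.coe_pow, h]; simp
  rw [← denom_pow_of_smul_eq hz, denom_apply, hc, hd]
  simp

lemma lowerLeft_ne_zero_of_smul_eq (hz : γ • z = z) (h1 : (γ : Matrix (Fin 2) (Fin 2) ℤ) ≠ 1)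
    (hm1 : (γ : Matrix (Fin 2) (Fin 2) ℤ) ≠ -1) : γ 1 0 ≠ 0 := by
  intro hc
  -- With `c = 0` the matrix is `±[[1, b], [0, 1]]`, which moves every point unless `b = 0`.
  have had : γ 0 0 * γ 1 1 = 1 := by
    have := γ.det_coe; rw [Matrix.det_fin_two, hc] at this; lia
  obtain ⟨ha, hd⟩ | ⟨ha, hd⟩ := Int.eq_one_or_neg_one_of_mul_eq_one' had <;>
  have hb : γ 0 1 = 0 := by
    simpa [specialLinearGroup_apply, ha, hc, hd, div_neg] using congrArg (fun w : ℍ ↦ (w : ℂ)) hz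
  · exact h1 (by ext i j; fin_cases i <;> fin_cases j <;> simp [ha, hb, hc, hd])
  · exact hm1 (by ext i j; fin_cases i <;> fin_cases j <;> simp [ha, hb, hc, hd])

lemma im_denom_ne_zero_of_smul_eq (hz : γ • z = z) (h1 : (γ : Matrix (Fin 2) (Fin 2) ℤ) ≠ 1)
    (hm1 : (γ : Matrix (Fin 2) (Fin 2) ℤ) ≠ -1) : (denom γ z).im ≠ 0 := by
  have : (denom γ z).im = γ 1 0 * z.im := by simp [denom_apply]
  rw [this]
  exact mul_ne_zero (Int.cast_ne_zero.mpr (lowerLeft_ne_zero_of_smul_eq hz h1 hm1)) z.im_ne_zero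

end ModularGroup

lemma ModularForm.denom_zpow_eq_one_of_slash_eq {f : ℍ → ℂ} {k : ℤ} {γ : SL(2, ℤ)} {z : ℍ}
    (hf : f ∣[k] γ = f) (hz : γ • z = z) (hfz : f z ≠ 0) : denom γ z ^ k = 1 := by
  have h := (slash_action_eq'_iff k f γ z).mp (by rw [hf])
  rw [hz, ← ModularGroup.denom_apply] at h
  exact (mul_eq_right₀ hfz).mp h.symm

lemma three_dvd_of_pow_three_eq_one {G : Type*} [DivisionCommMonoid G] {u : G} {k : ℤ}
    (h3 : u ^ 3 = 1) (h1 : u ≠ 1) (hk : u ^ k = 1) : 3 ∣ k := by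
  have := IsPrimitiveRoot.iff_orderOf.mpr (orderOf_eq_prime h3 h1)
  exact_mod_cast (this.zpow_eq_one_iff_dvd k).mp hk

section Field

variable {K : Type*} [Field K] {u : K} {k : ℤ}

lemma four_dvd_of_sq_eq_neg_one [CharZero K] (h2 : u ^ 2 = -1) (hk : u ^ k = 1) : 4 ∣ k := by
  have : orderOf u = 2 ^ 2 := orderOf_eq_prime_pow (by rw [pow_one, h2]; norm_num)
    (by rw [show u ^ 2 ^ (1 + 1) = (u ^ 2) ^ 2 by ring, h2]; norm_num)
  exact_mod_cast ((IsPrimitiveRoot.iff_orderOf.mpr this).zpow_eq_one_iff_dvd k).mp hk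

lemma six_dvd_of_pow_three_eq_one_or_neg_one (h3 : u ^ 3 = 1 ∨ u ^ 3 = -1) (h1 : u ≠ 1)
    (hm1 : u ≠ -1) (hk : u ^ k = 1) (heven : Even k) : 6 ∣ k := by
  suffices 3 ∣ k by obtain ⟨m, rfl⟩ := heven; omega
  rcases h3 with h3 | h3
  · exact three_dvd_of_pow_three_eq_one h3 h1 hk
  · refine three_dvd_of_pow_three_eq_one (u := -u) (by rw [neg_pow, h3]; norm_num) ?_ ?_
    · exact fun h ↦ hm1 (by rw [← neg_neg u, h])
    · rwa [heven.neg_zpow]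

end Field

theorem weight_divisibility_of_elliptic_points_general (N : ℕ) (k : ℤ)
    (hk : Even k) (f : UpperHalfPlane → ℂ)
    (hslash : ∀ γ : Matrix.SpecialLinearGroup (Fin 2) ℤ,
      γ ∈ CongruenceSubgroup.Gamma0 N → f ∣[k] γ = f)
    (hnv : ∀ z : UpperHalfPlane, f z ≠ 0) :
    ((∃ (γ : Matrix.SpecialLinearGroup (Fin 2) ℤ) (z : UpperHalfPlane),
        γ ∈ CongruenceSubgroup.Gamma0 N ∧ γ • z = z ∧
        (γ : Matrix (Fin 2) (Fin 2) ℤ) ≠ 1 ∧ (γ : Matrix (Fin 2) (Fin 2) ℤ) ≠ -1 ∧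
        (γ : Matrix (Fin 2) (Fin 2) ℤ) ^ 2 = -1) → 4 ∣ k) ∧
    ((∃ (γ : Matrix.SpecialLinearGroup (Fin 2) ℤ) (z : UpperHalfPlane),
        γ ∈ CongruenceSubgroup.Gamma0 N ∧ γ • z = z ∧
        (γ : Matrix (Fin 2) (Fin 2) ℤ) ≠ 1 ∧ (γ : Matrix (Fin 2) (Fin 2) ℤ) ≠ -1 ∧
        ((γ : Matrix (Fin 2) (Fin 2) ℤ) ^ 3 = 1 ∨
          (γ : Matrix (Fin 2) (Fin 2) ℤ) ^ 3 = -1)) → 6 ∣ k) := by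
  constructor
  · rintro ⟨γ, z, hγ, hz, -, -, hsq⟩
    have hjk := denom_zpow_eq_one_of_slash_eq (hslash γ hγ) hz (hnv z)
    refine four_dvd_of_sq_eq_neg_one ?_ hjk
    exact_mod_cast ModularGroup.denom_pow_eq_of_pow_eq_smul_one hz (ε := -1) (by simpa using hsq)
  · rintro ⟨γ, z, hγ, hz, h1, hm1, hcube⟩
    have hjk := denom_zpow_eq_one_of_slash_eq (hslash γ hγ) hz (hnv z)
    have him := ModularGroup.im_denom_ne_zero_of_smul_eq hz h1 hm1
    refine six_dvd_of_pow_three_eq_one_or_neg_one (hcube.imp (fun h ↦ ?_) (fun h ↦ ?_))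
      (fun h ↦ by simp [h] at him) (fun h ↦ by simp [h] at him) hjk hk
    · exact_mod_cast ModularGroup.denom_pow_eq_of_pow_eq_smul_one hz (ε := 1) (by simpa using h)
    · exact_mod_cast ModularGroup.denom_pow_eq_of_pow_eq_smul_one hz (ε := -1) (by simpa using h)

/-- The necessity direction of Lemma 5.1 of Rouse–Webb: if there is a nonzero weakly
holomorphic modular form `f` of positive even weight `k` on `Γ₀(N)` which is
non-vanishing on the upper half plane, then the existence of an elliptic point of
order 2 for `Γ₀(N)` forces `4 ∣ k`, and the existence of an elliptic point of order 3
forces `6 ∣ k`. -/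
theorem weight_divisibility_of_elliptic_points (N : ℕ) (hN : 0 < N) (k : ℤ)
    (hk : Even k) (hkpos : 0 < k) (f : UpperHalfPlane → ℂ)
    (hol : MDifferentiable 𝓘(ℂ) 𝓘(ℂ) f)
    (hslash : ∀ γ : Matrix.SpecialLinearGroup (Fin 2) ℤ,
      γ ∈ CongruenceSubgroup.Gamma0 N → f ∣[k] γ = f)
    (hcusps : ∀ γ : Matrix.SpecialLinearGroup (Fin 2) ℤ, ∃ (m : ℤ) (b : ℕ → ℂ),
      ∀ z : UpperHalfPlane, (f ∣[k] γ) z =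
        ∑' n : ℕ, b n * Complex.exp (2 * Real.pi * Complex.I * ((m + n : ℤ) : ℂ) * (z : ℂ) / N))
    (hnv : ∀ z : UpperHalfPlane, f z ≠ 0) :
    ((∃ (γ : Matrix.SpecialLinearGroup (Fin 2) ℤ) (z : UpperHalfPlane),
        γ ∈ CongruenceSubgroup.Gamma0 N ∧ γ • z = z ∧
        (γ : Matrix (Fin 2) (Fin 2) ℤ) ≠ 1 ∧ (γ : Matrix (Fin 2) (Fin 2) ℤ) ≠ -1 ∧
        (γ : Matrix (Fin 2) (Fin 2) ℤ) ^ 2 = -1) → 4 ∣ k) ∧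
    ((∃ (γ : Matrix.SpecialLinearGroup (Fin 2) ℤ) (z : UpperHalfPlane),
        γ ∈ CongruenceSubgroup.Gamma0 N ∧ γ • z = z ∧
        (γ : Matrix (Fin 2) (Fin 2) ℤ) ≠ 1 ∧ (γ : Matrix (Fin 2) (Fin 2) ℤ) ≠ -1 ∧
        ((γ : Matrix (Fin 2) (Fin 2) ℤ) ^ 3 = 1 ∨
          (γ : Matrix (Fin 2) (Fin 2) ℤ) ^ 3 = -1)) → 6 ∣ k) :=
  weight_divisibility_of_elliptic_points_general N k hk f hslash hnv
end

section
/- Let k be a positive even integer and suppose the exponents (r_δ)_{δ|N} of an eta-quotient f(z) = Π_{δ|N} η(δz)^{r_δ} ∈ M_k(Γ₀(N)) satisfy Ligozat's non-negativity conditions at all cusps. Then Σ_{δ|N} |r_δ| ≤ 2k·Π_{p|N} ((p+1)/(p−1))^{min(2, ord_p(N))}. -/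
open Finset

/-!
Up to positive factors, the orders of vanishing at the cusps `1/d` are the numbers
`L d = ∑_δ gcd(d, δ)² r_δ / δ`, i.e. `L = A r` for the matrix `A = (gcd(d, δ)² / δ)_{d, δ ∣ N}`.
This matrix is the tensor product over `p ∣ N` of the local matrices
`(p^(2 min(j, i) - i))_{j, i ≤ a}`, `a = ord_p N`, whose inverses are tridiagonal because
`p^(-|j - i|)` is a Green's function of a second-order difference operator. Hence `r = A⁻¹ L` is a
non-negative combination of the columns of `A⁻¹` (the extremal eta-quotients). A local computation
shows that each local column `v` satisfies `∑ |v| ≤ ((p+1)/(p-1))^min(2, a) ∑ v`; the bound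
multiplies over the tensor product, and summing against `L ≥ 0` gives
`∑ |r| ≤ C_N ∑ r = 2k C_N`.
-/

theorem sum_abs_le_of_nonneg_combination {R ι κ : Type*} [CommRing R] [LinearOrder R]
    [IsOrderedRing R] (s : Finset ι) (t : Finset κ) (B : ι → κ → R) (L : κ → R) (C : R)
    (hL : ∀ d ∈ t, 0 ≤ L d) (hcol : ∀ d ∈ t, ∑ δ ∈ s, |B δ d| ≤ C * ∑ δ ∈ s, B δ d) :
    ∑ δ ∈ s, |∑ d ∈ t, B δ d * L d| ≤ C * ∑ δ ∈ s, ∑ d ∈ t, B δ d * L d :=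
  calc ∑ δ ∈ s, |∑ d ∈ t, B δ d * L d|
      ≤ ∑ δ ∈ s, ∑ d ∈ t, |B δ d| * L d := sum_le_sum fun δ _ =>
        (abs_sum_le_sum_abs _ _).trans_eq <|
          sum_congr rfl fun d hd => by rw [abs_mul, abs_of_nonneg (hL d hd)]
    _ = ∑ d ∈ t, (∑ δ ∈ s, |B δ d|) * L d := by rw [sum_comm]; simp only [sum_mul]
    _ ≤ ∑ d ∈ t, (C * ∑ δ ∈ s, B δ d) * L d :=
        sum_le_sum fun d hd => mul_le_mul_of_nonneg_right (hcol d hd) (hL d hd)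
    _ = C * ∑ δ ∈ s, ∑ d ∈ t, B δ d * L d := by
        rw [sum_comm, mul_sum]; simp only [sum_mul, mul_sum, mul_assoc]

theorem sum_div_nonneg_of_sum_div_mul_nonneg {ι K : Type*} [Field K] [LinearOrder K]
    [IsStrictOrderedRing K] {s : Finset ι} {x y : ι → K} {c : K} (hc : 0 < c)
    (h : 0 ≤ ∑ i ∈ s, x i / (c * y i)) : 0 ≤ ∑ i ∈ s, x i / y i := by
  rw [show ∑ i ∈ s, x i / (c * y i) = (∑ i ∈ s, x i / y i) / c by
    rw [sum_div]; exact sum_congr rfl fun i _ => by rw [div_div, mul_comm]] at h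
  simpa using (le_div_iff₀ hc).1 h

section Tridiagonal

variable {R : Type*}

def tridiag [Zero R] (D : ℕ → R) (o : R) (i j : ℕ) : R :=
  if i = j then D i else if i + 1 = j ∨ j + 1 = i then o else 0

theorem tridiag_comm [Zero R] (D : ℕ → R) (o : R) (i j : ℕ) :
    tridiag D o i j = tridiag D o j i := by
  unfold tridiag
  split_ifs <;> first | rfl | omega | (subst_vars; rfl)

theorem sum_range_tridiag_mul [NonAssocSemiring R] {a i : ℕ} (hi : i ≤ a) (D : ℕ → R) (o : R)
    (F : ℕ → R) :
    ∑ j ∈ range (a + 1), tridiag D o i j * F j =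
      D i * F i + (if i < a then o * F (i + 1) else 0) + (if 0 < i then o * F (i - 1) else 0) := by
  have hterm : ∀ j, tridiag D o i j * F j = (if i = j then D i * F i else 0) +
      (if i + 1 = j then o * F (i + 1) else 0) +
      (if 0 < i then (if i - 1 = j then o * F (i - 1) else 0) else 0) := by
    intro j
    unfold tridiag
    split_ifs <;> first | omega | simp_all
  simp only [hterm, sum_add_distrib, sum_ite_eq, mem_range]
  by_cases h0 : 0 < i
  · simp [h0, show i < a + 1 by omega, show i - 1 < a + 1 by omega]
  · simp [h0, show i < a + 1 by omega]

theorem abs_tridiag [Ring R] [LinearOrder R] [IsOrderedRing R] (D : ℕ → R) (o : R) (i j : ℕ) :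
    |tridiag D o i j| = tridiag (fun i => |D i|) |o| i j := by
  unfold tridiag
  split_ifs <;> simp

end Tridiagonal

theorem pow_two_min_mul_pow_dist {M : Type*} [Monoid M] (x : M) (j i : ℕ) :
    x ^ (2 * min j i) * x ^ Nat.dist j i = x ^ j * x ^ i := by
  rw [← pow_add, ← pow_add, Nat.dist]
  congr 1
  omega

theorem pow_dist_of_add_eq {M : Type*} [Monoid M] (x : M) {j i k : ℕ} (h : j + k = i ∨ i + k = j) :
    x ^ Nat.dist j i = x ^ k := by
  rw [Nat.dist]
  congr 1
  omega

section LocalInverse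

def ligozatDiag (p a i : ℕ) : ℚ := if 0 < i ∧ i < a then (p : ℚ) ^ 2 + 1 else (p : ℚ) ^ 2

def ligozatInvLocal (p a i j : ℕ) : ℚ :=
  tridiag (ligozatDiag p a) (-(p : ℚ)) i j / (((p : ℚ) ^ 2 - 1) * (p : ℚ) ^ j)

variable {p a : ℕ}

theorem sq_sub_one_mul_pow_pos (hp : 1 < p) (j : ℕ) :
    (0 : ℚ) < ((p : ℚ) ^ 2 - 1) * (p : ℚ) ^ j := by
  have : (1 : ℚ) < p := by exact_mod_cast hp
  have : (0 : ℚ) < (p : ℚ) ^ 2 - 1 := by nlinarith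
  positivity

theorem sum_tridiag_mul_inv_pow_dist (hp : p ≠ 0) {i i' : ℕ} (ha : 1 ≤ a) (hi : i ≤ a)
    (hi' : i' ≤ a) :
    ∑ j ∈ range (a + 1), tridiag (ligozatDiag p a) (-(p : ℚ)) i j * (p : ℚ)⁻¹ ^ Nat.dist j i' =
      if i = i' then (p : ℚ) ^ 2 - 1 else 0 := by
  set x := (p : ℚ)⁻¹
  have hpx : (p : ℚ) * x = 1 := mul_inv_cancel₀ (Nat.cast_ne_zero.2 hp)
  rw [sum_range_tridiag_mul hi]
  unfold ligozatDiag
  rcases lt_trichotomy i i' with h | rfl | h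
  · obtain ⟨m, rfl⟩ := Nat.exists_eq_add_of_lt h
    rw [pow_dist_of_add_eq x (k := m + 1) (by omega), pow_dist_of_add_eq x (k := m) (by omega),
      if_pos (show i < a by omega), if_neg (show ¬i = i + m + 1 by omega)]
    rcases Nat.eq_zero_or_pos i with rfl | hi0
    · simp only [lt_irrefl, false_and, if_false]
      linear_combination (x ^ m * (p : ℚ)) * hpx
    · rw [pow_dist_of_add_eq x (k := m + 2) (by omega), if_pos hi0,
        if_pos (show 0 < i ∧ i < a by omega)]
      linear_combination (x ^ m * ((p : ℚ) - x)) * hpx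
  · rw [Nat.dist_self, pow_dist_of_add_eq x (k := 1) (by omega), if_pos rfl]
    rcases Nat.eq_zero_or_pos i with rfl | hi0
    · simp only [lt_irrefl, false_and, if_false, if_pos (show 0 < a by omega)]
      linear_combination -hpx
    · rw [pow_dist_of_add_eq x (k := 1) (by omega), if_pos hi0]
      rcases eq_or_lt_of_le hi with rfl | hia
      · simp only [lt_irrefl, and_false, if_false]
        linear_combination -hpx
      · rw [if_pos hia, if_pos (show 0 < i ∧ i < a from ⟨hi0, hia⟩)]
        linear_combination -2 * hpx
  · obtain ⟨m, rfl⟩ := Nat.exists_eq_add_of_lt h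
    rw [pow_dist_of_add_eq x (k := m + 1) (by omega),
      pow_dist_of_add_eq x (j := i' + m + 1 - 1) (k := m) (by omega),
      if_pos (show 0 < i' + m + 1 by omega), if_neg (show ¬i' + m + 1 = i' by omega)]
    rcases eq_or_lt_of_le hi with hia | hia
    · simp only [hia, lt_irrefl, and_false, if_false]
      linear_combination (x ^ m * (p : ℚ)) * hpx
    · rw [pow_dist_of_add_eq x (k := m + 2) (by omega), if_pos hia,
        if_pos (show 0 < i' + m + 1 ∧ i' + m + 1 < a by omega)]
      linear_combination (x ^ m * ((p : ℚ) - x)) * hpx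

theorem sum_ligozatInvLocal_mul (hp : 1 < p) {i i' : ℕ} (ha : 1 ≤ a) (hi : i ≤ a) (hi' : i' ≤ a) :
    ∑ j ∈ range (a + 1), ligozatInvLocal p a i j * ((p : ℚ) ^ (2 * min j i') / (p : ℚ) ^ i') =
      if i = i' then 1 else 0 := by
  have hp0 : (p : ℚ) ≠ 0 := by positivity
  have hp2 : (p : ℚ) ^ 2 - 1 ≠ 0 := by
    have : (1 : ℚ) < p := by exact_mod_cast hp
    nlinarith
  have hterm : ∀ j, ligozatInvLocal p a i j * ((p : ℚ) ^ (2 * min j i') / (p : ℚ) ^ i') =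
      tridiag (ligozatDiag p a) (-(p : ℚ)) i j * (p : ℚ)⁻¹ ^ Nat.dist j i' / ((p : ℚ) ^ 2 - 1) := by
    intro j
    have h := pow_two_min_mul_pow_dist (p : ℚ) j i'
    rw [ligozatInvLocal, inv_pow]
    field_simp
    rw [mul_assoc, h, mul_assoc]
  simp only [hterm, ← sum_div, sum_tridiag_mul_inv_pow_dist (by omega : p ≠ 0) ha hi hi']
  split_ifs
  · exact div_self hp2
  · exact zero_div _

theorem sum_range_ligozatInvLocal {j : ℕ} (hj : j ≤ a) :
    ∑ i ∈ range (a + 1), ligozatInvLocal p a i j =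
      (ligozatDiag p a j + (if j < a then -(p : ℚ) else 0) + (if 0 < j then -(p : ℚ) else 0)) /
        (((p : ℚ) ^ 2 - 1) * (p : ℚ) ^ j) := by
  simp only [ligozatInvLocal, tridiag_comm _ _ _ j, ← sum_div]
  congr 1
  simpa using sum_range_tridiag_mul hj (ligozatDiag p a) (-(p : ℚ)) fun _ => 1

theorem sum_range_abs_ligozatInvLocal (hp : 1 < p) {j : ℕ} (hj : j ≤ a) :
    ∑ i ∈ range (a + 1), |ligozatInvLocal p a i j| =
      (ligozatDiag p a j + (if j < a then (p : ℚ) else 0) + (if 0 < j then (p : ℚ) else 0)) /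
        (((p : ℚ) ^ 2 - 1) * (p : ℚ) ^ j) := by
  have hD (i : ℕ) : |ligozatDiag p a i| = ligozatDiag p a i :=
    abs_of_nonneg (by unfold ligozatDiag; split_ifs <;> positivity)
  simp only [ligozatInvLocal, abs_div, abs_of_pos (sq_sub_one_mul_pow_pos hp j),
    tridiag_comm _ _ _ j, abs_tridiag, ← sum_div]
  congr 1
  simpa [hD, abs_of_pos (by positivity : (0 : ℚ) < p)] using
    sum_range_tridiag_mul hj (fun i => |ligozatDiag p a i|) |-(p : ℚ)| fun _ => 1

theorem ligozatDiag_add_le (hp : 1 < p) {j : ℕ} (ha : 1 ≤ a) (hj : j ≤ a) :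
    ligozatDiag p a j + (if j < a then (p : ℚ) else 0) + (if 0 < j then (p : ℚ) else 0) ≤
      (((p : ℚ) + 1) / ((p : ℚ) - 1)) ^ min 2 a * (ligozatDiag p a j +
        (if j < a then -(p : ℚ) else 0) + (if 0 < j then -(p : ℚ) else 0)) := by
  have hp1 : (1 : ℚ) < p := by exact_mod_cast hp
  have hp1' : (p : ℚ) - 1 ≠ 0 := by linarith
  unfold ligozatDiag
  by_cases hint : 0 < j ∧ j < a
  · simp only [hint, and_self, if_true, show min 2 a = 2 by omega]
    apply le_of_eq
    field_simp
    ring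
  · have hρ : 1 ≤ ((p : ℚ) + 1) / ((p : ℚ) - 1) := by
      rw [one_le_div (by linarith)]
      linarith
    have hneighbour (o : ℚ) : (if j < a then o else 0) + (if 0 < j then o else 0) = o := by
      split_ifs <;> first | omega | simp
    rw [if_neg hint, add_assoc, add_assoc, hneighbour, hneighbour]
    calc (p : ℚ) ^ 2 + p = (((p : ℚ) + 1) / ((p : ℚ) - 1)) ^ 1 * ((p : ℚ) ^ 2 + -p) := by
          field_simp
          ring
      _ ≤ _ := by
          gcongr
          · nlinarith
          · omega

theorem sum_abs_ligozatInvLocal_le (hp : 1 < p) {j : ℕ} (ha : 1 ≤ a) (hj : j ≤ a) :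
    ∑ i ∈ range (a + 1), |ligozatInvLocal p a i j| ≤
      (((p : ℚ) + 1) / ((p : ℚ) - 1)) ^ min 2 a * ∑ i ∈ range (a + 1), ligozatInvLocal p a i j := by
  rw [sum_range_abs_ligozatInvLocal hp hj, sum_range_ligozatInvLocal hj, ← mul_div_assoc,
    div_le_div_iff_of_pos_right (sq_sub_one_mul_pow_pos hp j)]
  exact ligozatDiag_add_le hp ha hj

end LocalInverse

section PrimePowerDecomposition

variable {p n m : ℕ}

theorem sum_divisors_prime_pow_mul {M : Type*} [AddCommMonoid M] (hp : p.Prime) (hpm : ¬p ∣ m)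
    (F : ℕ → M) :
    ∑ d ∈ (p ^ n * m).divisors, F d = ∑ j ∈ range (n + 1), ∑ f ∈ m.divisors, F (p ^ j * f) := by
  have hcop : (p ^ n).Coprime m := (hp.coprime_iff_not_dvd.2 hpm).pow_left n
  rw [Nat.divisors_mul, mul_def, sum_image hcop.mul_injOn_divisors, sum_product,
    Nat.divisors_prime_pow hp, sum_map]
  rfl

theorem exists_eq_prime_pow_mul_of_dvd (hp : p.Prime) (hpm : ¬p ∣ m) {d : ℕ} (hd : d ∣ p ^ n * m) :
    ∃ i ≤ n, ∃ e, e ∣ m ∧ d = p ^ i * e := by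
  have hcop : (p ^ n).Coprime m := (hp.coprime_iff_not_dvd.2 hpm).pow_left n
  obtain ⟨i, hi, hpi⟩ := (Nat.dvd_prime_pow hp).1 (Nat.gcd_dvd_right d (p ^ n))
  exact ⟨i, hi, d.gcd m, Nat.gcd_dvd_right d m,
    by rw [← hpi, (Nat.gcd_mul_gcd_eq_iff_dvd_mul_of_coprime hcop).2 hd]⟩

theorem factorization_prime_pow_mul_self (hp : p.Prime) (hm : m ≠ 0) (hpm : ¬p ∣ m) :
    (p ^ n * m).factorization p = n := by
  simp [Nat.factorization_mul (pow_ne_zero n hp.ne_zero) hm, hp.factorization_pow,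
    Nat.factorization_eq_zero_of_not_dvd hpm]

theorem factorization_prime_pow_mul_of_ne (hp : p.Prime) (hm : m ≠ 0) {q : ℕ} (hq : q ≠ p) :
    (p ^ n * m).factorization q = m.factorization q := by
  simp [Nat.factorization_mul (pow_ne_zero n hp.ne_zero) hm, hp.factorization_pow,
    Finsupp.single_eq_of_ne hq]

theorem prime_pow_mul_inj (hp : p.Prime) {i i' e e' : ℕ} (he : e ≠ 0) (he' : e' ≠ 0)
    (hpe : ¬p ∣ e) (hpe' : ¬p ∣ e') : p ^ i * e = p ^ i' * e' ↔ i = i' ∧ e = e' := by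
  refine ⟨fun h => ?_, by rintro ⟨rfl, rfl⟩; rfl⟩
  have hi : i = i' := by
    rw [← factorization_prime_pow_mul_self (n := i) hp he hpe, h,
      factorization_prime_pow_mul_self hp he' hpe']
  subst hi
  exact ⟨rfl, Nat.eq_of_mul_eq_mul_left (pow_pos hp.pos i) h⟩

theorem gcd_prime_pow_mul (hp : p.Prime) {j i f e : ℕ} (hpf : ¬p ∣ f) (hpe : ¬p ∣ e) :
    Nat.gcd (p ^ j * f) (p ^ i * e) = p ^ min j i * Nat.gcd f e := by
  have hcop {x : ℕ} (hx : ¬p ∣ x) (k : ℕ) : (p ^ k).Coprime x :=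
    (hp.coprime_iff_not_dvd.2 hx).pow_left k
  rw [Nat.Coprime.gcd_mul _ (hcop hpe i), Nat.Coprime.gcd_mul_right_cancel _ (hcop hpf i).symm,
    Nat.Coprime.gcd_mul_left_cancel _ (hcop hpe j)]
  congr 1
  rcases le_total j i with h | h
  · rw [min_eq_left h, Nat.gcd_eq_left (pow_dvd_pow p h)]
  · rw [min_eq_right h, Nat.gcd_eq_right (pow_dvd_pow p h)]

end PrimePowerDecomposition

section LigozatInverse

def ligozatInv (N δ d : ℕ) : ℚ :=
  ∏ p ∈ N.primeFactors,
    ligozatInvLocal p (N.factorization p) (δ.factorization p) (d.factorization p)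

def rouseWebbConst (N : ℕ) : ℚ :=
  ∏ p ∈ N.primeFactors, (((p : ℚ) + 1) / ((p : ℚ) - 1)) ^ min 2 (N.factorization p)

variable {p n m : ℕ}

theorem prod_primeFactors_prime_pow_mul {M : Type*} [CommMonoid M] (hp : p.Prime) (hn : n ≠ 0)
    (hm : m ≠ 0) (hpm : ¬p ∣ m) (G : ℕ → M) :
    ∏ q ∈ (p ^ n * m).primeFactors, G q = G p * ∏ q ∈ m.primeFactors, G q := by
  rw [Nat.primeFactors_mul (pow_ne_zero n hp.ne_zero) hm, Nat.primeFactors_prime_pow hn hp,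
    ← insert_eq, prod_insert fun h => hpm (Nat.dvd_of_mem_primeFactors h)]

theorem ligozatInv_prime_pow_mul (hp : p.Prime) (hn : n ≠ 0) (hm : m ≠ 0) (hpm : ¬p ∣ m)
    {i j e f : ℕ} (he : e ∣ m) (hf : f ∣ m) :
    ligozatInv (p ^ n * m) (p ^ i * e) (p ^ j * f) =
      ligozatInvLocal p n i j * ligozatInv m e f := by
  have he0 : e ≠ 0 := ne_zero_of_dvd_ne_zero hm he
  have hf0 : f ≠ 0 := ne_zero_of_dvd_ne_zero hm hf
  rw [ligozatInv, prod_primeFactors_prime_pow_mul hp hn hm hpm,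
    factorization_prime_pow_mul_self hp hm hpm,
    factorization_prime_pow_mul_self hp he0 fun h => hpm (h.trans he),
    factorization_prime_pow_mul_self hp hf0 fun h => hpm (h.trans hf)]
  congr 1
  refine prod_congr rfl fun q hq => ?_
  have hqp : q ≠ p := by rintro rfl; exact hpm (Nat.dvd_of_mem_primeFactors hq)
  rw [factorization_prime_pow_mul_of_ne hp hm hqp, factorization_prime_pow_mul_of_ne hp he0 hqp,
    factorization_prime_pow_mul_of_ne hp hf0 hqp]

theorem rouseWebbConst_prime_pow_mul (hp : p.Prime) (hn : n ≠ 0) (hm : m ≠ 0) (hpm : ¬p ∣ m) :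
    rouseWebbConst (p ^ n * m) =
      (((p : ℚ) + 1) / ((p : ℚ) - 1)) ^ min 2 n * rouseWebbConst m := by
  rw [rouseWebbConst, prod_primeFactors_prime_pow_mul hp hn hm hpm,
    factorization_prime_pow_mul_self hp hm hpm]
  congr 1
  refine prod_congr rfl fun q hq => ?_
  have hqp : q ≠ p := by rintro rfl; exact hpm (Nat.dvd_of_mem_primeFactors hq)
  rw [factorization_prime_pow_mul_of_ne hp hm hqp]

theorem sum_ligozatInv_mul_gcd_sq (N : ℕ) {δ δ' : ℕ} (hδ : δ ∈ N.divisors) (hδ' : δ' ∈ N.divisors) :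
    ∑ d ∈ N.divisors, ligozatInv N δ d * ((Nat.gcd d δ' : ℚ) ^ 2 / δ') =
      if δ = δ' then 1 else 0 := by
  induction N using Nat.recOnPrimePow generalizing δ δ' with
  | zero => simp at hδ
  | one =>
    simp only [Nat.divisors_one, mem_singleton] at hδ hδ'
    simp [hδ, hδ', ligozatInv]
  | prime_pow_mul m p n hp hpm hn ih =>
    have hm : m ≠ 0 := by rintro rfl; simp at hδ
    obtain ⟨i, hi, e, he, rfl⟩ := exists_eq_prime_pow_mul_of_dvd hp hpm (Nat.dvd_of_mem_divisors hδ)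
    obtain ⟨i', hi', e', he', rfl⟩ :=
      exists_eq_prime_pow_mul_of_dvd hp hpm (Nat.dvd_of_mem_divisors hδ')
    have hpe' : ¬p ∣ e' := fun h => hpm (h.trans he')
    have hterm : ∀ j, ∀ f ∈ m.divisors,
        ligozatInv (p ^ n * m) (p ^ i * e) (p ^ j * f) *
            ((Nat.gcd (p ^ j * f) (p ^ i' * e') : ℚ) ^ 2 / ((p ^ i' * e' : ℕ) : ℚ)) =
          ligozatInvLocal p n i j * ((p : ℚ) ^ (2 * min j i') / (p : ℚ) ^ i') *
            (ligozatInv m e f * ((Nat.gcd f e' : ℚ) ^ 2 / e')) := by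
      intro j f hf
      rw [ligozatInv_prime_pow_mul hp hn.ne' hm hpm he (Nat.dvd_of_mem_divisors hf),
        gcd_prime_pow_mul hp (fun h => hpm (h.trans (Nat.dvd_of_mem_divisors hf))) hpe']
      push_cast
      ring
    have he0 : e ≠ 0 := ne_zero_of_dvd_ne_zero hm he
    have he0' : e' ≠ 0 := ne_zero_of_dvd_ne_zero hm he'
    rw [sum_divisors_prime_pow_mul hp hpm, sum_congr rfl fun j _ => sum_congr rfl (hterm j),
      ← sum_mul_sum, sum_ligozatInvLocal_mul hp.one_lt hn hi hi',
      ih (Nat.mem_divisors.2 ⟨he, hm⟩) (Nat.mem_divisors.2 ⟨he', hm⟩),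
      ite_zero_mul_ite_zero, mul_one]
    exact if_congr (prime_pow_mul_inj hp he0 he0' (fun h => hpm (h.trans he)) hpe').symm rfl rfl

theorem sum_abs_ligozatInv_le (N : ℕ) {d : ℕ} (hd : d ∈ N.divisors) :
    ∑ δ ∈ N.divisors, |ligozatInv N δ d| ≤
      rouseWebbConst N * ∑ δ ∈ N.divisors, ligozatInv N δ d := by
  induction N using Nat.recOnPrimePow generalizing d with
  | zero => simp at hd
  | one =>
    simp only [Nat.divisors_one, mem_singleton] at hd
    simp [hd, ligozatInv, rouseWebbConst]
  | prime_pow_mul m p n hp hpm hn ih =>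
    have hm : m ≠ 0 := by rintro rfl; simp at hd
    obtain ⟨j, hj, f, hf, rfl⟩ := exists_eq_prime_pow_mul_of_dvd hp hpm (Nat.dvd_of_mem_divisors hd)
    have hterm : ∀ i, ∀ e ∈ m.divisors, ligozatInv (p ^ n * m) (p ^ i * e) (p ^ j * f) =
        ligozatInvLocal p n i j * ligozatInv m e f := fun i e he =>
      ligozatInv_prime_pow_mul hp hn.ne' hm hpm (Nat.dvd_of_mem_divisors he) hf
    simp only [sum_divisors_prime_pow_mul hp hpm]
    rw [sum_congr rfl fun i _ => sum_congr rfl (hterm i), ← sum_mul_sum,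
      sum_congr rfl fun i _ => sum_congr rfl fun e he => congrArg abs (hterm i e he)]
    simp only [abs_mul, ← sum_mul_sum]
    rw [rouseWebbConst_prime_pow_mul hp hn.ne' hm hpm, mul_mul_mul_comm]
    exact mul_le_mul (sum_abs_ligozatInvLocal_le hp.one_lt hn hj)
      (ih (Nat.mem_divisors.2 ⟨hf, hm⟩)) (sum_nonneg fun _ _ => abs_nonneg _)
      ((sum_nonneg fun _ _ => abs_nonneg _).trans (sum_abs_ligozatInvLocal_le hp.one_lt hn hj))

theorem eq_sum_ligozatInv_mul (N : ℕ) (r : ℕ → ℚ) {δ : ℕ} (hδ : δ ∈ N.divisors) :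
    r δ = ∑ d ∈ N.divisors, ligozatInv N δ d *
      ∑ δ' ∈ N.divisors, (Nat.gcd d δ' : ℚ) ^ 2 * r δ' / δ' :=
  calc r δ = ∑ δ' ∈ N.divisors, r δ' * if δ = δ' then 1 else 0 := by simp [hδ]
    _ = ∑ δ' ∈ N.divisors,
          r δ' * ∑ d ∈ N.divisors, ligozatInv N δ d * ((Nat.gcd d δ' : ℚ) ^ 2 / δ') :=
        sum_congr rfl fun δ' hδ' => by rw [sum_ligozatInv_mul_gcd_sq N hδ hδ']
    _ = _ := by
        simp only [mul_sum]
        rw [sum_comm]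
        exact sum_congr rfl fun d _ => sum_congr rfl fun δ' _ => by ring

end LigozatInverse

theorem eta_quotient_exponent_bound_general (N : ℕ) (k : ℕ) (r : ℕ → ℤ)
    (hweight : ∑ δ ∈ N.divisors, r δ = 2 * (k : ℤ))
    (hligozat : ∀ d ∈ N.divisors, (0 : ℚ) ≤ ∑ δ ∈ N.divisors,
      (Nat.gcd d δ : ℚ) ^ 2 * (r δ : ℚ) /
        ((Nat.gcd d (N / d) : ℚ) * (d : ℚ) * (δ : ℚ))) :
    ((∑ δ ∈ N.divisors, |r δ| : ℤ) : ℚ) ≤ 2 * (k : ℚ) *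
      ∏ p ∈ N.primeFactors,
        (((p : ℚ) + 1) / ((p : ℚ) - 1)) ^ (min 2 (N.factorization p)) := by
  set L : ℕ → ℚ := fun d => ∑ δ ∈ N.divisors, (Nat.gcd d δ : ℚ) ^ 2 * (r δ : ℚ) / δ
  have hL : ∀ d ∈ N.divisors, 0 ≤ L d := fun d hd => by
    have hd0 := Nat.pos_of_mem_divisors hd
    have := Nat.gcd_pos_of_pos_left (N / d) hd0
    exact sum_div_nonneg_of_sum_div_mul_nonneg (by positivity) (hligozat d hd)
  have hr (δ) (hδ : δ ∈ N.divisors) := eq_sum_ligozatInv_mul N (fun δ => (r δ : ℚ)) hδ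
  calc ((∑ δ ∈ N.divisors, |r δ| : ℤ) : ℚ)
      = ∑ δ ∈ N.divisors, |∑ d ∈ N.divisors, ligozatInv N δ d * L d| := by
        push_cast
        exact sum_congr rfl fun δ hδ => by rw [← hr δ hδ]
    _ ≤ rouseWebbConst N * ∑ δ ∈ N.divisors, ∑ d ∈ N.divisors, ligozatInv N δ d * L d :=
        sum_abs_le_of_nonneg_combination _ _ _ _ _ hL fun d hd => sum_abs_ligozatInv_le N hd
    _ = 2 * (k : ℚ) * rouseWebbConst N := by
        rw [← sum_congr rfl hr, mul_comm]
        congr 1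
        exact_mod_cast hweight

/-- Theorem 2 of Rouse–Webb: if the exponents `(r_δ)_{δ ∣ N}` of an eta-quotient
`f = ∏_{δ∣N} η(δz)^{r_δ} ∈ M_k(Γ₀(N))` (so `∑ r_δ = 2k` and the Ligozat order of
vanishing at every cusp `1/d`, `d ∣ N`, is non-negative), then
`∑ |r_δ| ≤ 2k ∏_{p∣N} ((p+1)/(p-1))^{min(2, ord_p(N))}`. -/
theorem eta_quotient_exponent_bound (N : ℕ) (hN : 0 < N) (k : ℕ) (hk : Even k)
    (hkpos : 0 < k) (r : ℕ → ℤ)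
    (hweight : ∑ δ ∈ N.divisors, r δ = 2 * (k : ℤ))
    (hligozat : ∀ d ∈ N.divisors, (0 : ℚ) ≤ ∑ δ ∈ N.divisors,
      (Nat.gcd d δ : ℚ) ^ 2 * (r δ : ℚ) /
        ((Nat.gcd d (N / d) : ℚ) * (d : ℚ) * (δ : ℚ))) :
    ((∑ δ ∈ N.divisors, |r δ| : ℤ) : ℚ) ≤ 2 * (k : ℚ) *
      ∏ p ∈ N.primeFactors,
        (((p : ℚ) + 1) / ((p : ℚ) - 1)) ^ (min 2 (N.factorization p)) :=
  eta_quotient_exponent_bound_general N k r hweight hligozat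
end
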